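/- Let H be an n_cN × n_vN block matrix of N × N permutation matrices P_{ij}. Then the Tanner graph of H has girth greater than 4 if and only if for all i ≠ j in [n_c], every entry of the matrix C_{ij} = Σ_{k=1}^{n_v} P_{ik} P_{jk}ᵀ (computed over ℕ) is at most 1. -/

import Mathlib

open Matrix

/-- The permutation matrix (over ℕ) associated with a permutation. -/
def permMatrix {N : ℕ} (σ : Equiv.Perm (Fin N)) : Matrix (Fin N) (Fin N) ℕ :=
  Matrix.of fun i j => if σ i = j then 1 else 0

/-- The Tanner graph of an ℕ-valued matrix: the bipartite simple graph on rows ⊕ columns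
with an edge between row `i` and column `j` whenever `M i j ≠ 0`. -/
def tanner {α β : Type*} (M : Matrix α β ℕ) : SimpleGraph (α ⊕ β) :=
  SimpleGraph.fromRel fun u v => ∃ i j, u = Sum.inl i ∧ v = Sum.inr j ∧ M i j ≠ 0

open Classical in
/-- The girth of the Tanner (multi)graph of an ℕ-valued matrix: an entry `≥ 2` is a
multiple edge, giving girth `2`; otherwise the girth of the Tanner simple graph
(`⊤` if there is no cycle). -/
noncomputable def matGirth {α β : Type*} (M : Matrix α β ℕ) : ℕ∞ :=
  if ∃ i j, 2 ≤ M i j then 2 else (tanner M).egirth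


/-- The block matrix whose `(i, j)` block is the permutation matrix of `σ i j`. -/
def Hperm {N nc nv : ℕ} (σ : Fin nc → Fin nv → Equiv.Perm (Fin N)) :
    Matrix (Fin nc × Fin N) (Fin nv × Fin N) ℕ :=
  Matrix.of fun p q => permMatrix (σ p.1 q.1) p.2 q.2

/-!
The Tanner graph is bipartite, so its girth exceeds 4 exactly when it has no 4-cycle, that is,
when no two distinct rows of `H` have two common nonzero columns. Row `(i, a)` of `H` has exactly
one nonzero entry in each column block `k`, at column `(k, σ i k a)`; hence rows `(i, a)` and
`(j, b)` share exactly `C_ij(a, b)` columns, and two rows in the same block row share none.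
-/

namespace SimpleGraph

variable {V : Type*} {G : SimpleGraph V}

theorem exists_isCycle_length_eq_four_iff :
    (∃ u, ∃ w : G.Walk u u, w.IsCycle ∧ w.length = 4) ↔
      ∃ a b c d, a ≠ c ∧ b ≠ d ∧ G.Adj a b ∧ G.Adj b c ∧ G.Adj c d ∧ G.Adj d a := by
  constructor
  · rintro ⟨u, w, hw, hlen⟩
    rcases w with _ | ⟨hab, _ | ⟨hbc, _ | ⟨hcd, _ | ⟨hda, _ | ⟨_, _⟩⟩⟩⟩⟩ <;>
      simp only [Walk.length_cons, Walk.length_nil] at hlen <;> try omega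
    obtain ⟨-, -, hnodup⟩ := Walk.isCycle_def _ |>.mp hw
    simp only [Walk.support_cons, Walk.support_nil, List.tail_cons] at hnodup
    exact ⟨_, _, _, _, by grind, by grind, hab, hbc, hcd, hda⟩
  · rintro ⟨a, b, c, d, hac, hbd, hab, hbc, hcd, hda⟩
    refine ⟨a, .cons hab (.cons hbc (.cons hcd (.cons hda .nil))), ?_, rfl⟩
    rw [Walk.cons_isCycle_iff, Walk.isPath_def]
    simp only [Walk.support_cons, Walk.support_nil, Walk.edges_cons, Walk.edges_nil,
      List.nodup_cons, List.mem_cons, List.not_mem_nil, List.nodup_nil, Sym2.eq_iff]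
    grind [hab.ne, hbc.ne, hcd.ne, hda.ne]

/-- Cycles of a bipartite graph have even length, so only 4-cycles stand between it and
girth at least 5. -/
theorem IsBipartite.four_lt_egirth_iff (hG : G.IsBipartite) :
    4 < G.egirth ↔ ¬ ∃ u, ∃ w : G.Walk u u, w.IsCycle ∧ w.length = 4 := by
  constructor
  · rintro hgirth ⟨u, w, hw, hlen⟩
    exact (egirth_le_length hw).not_gt (by simpa [hlen] using hgirth)
  · intro hno
    refine lt_of_lt_of_le (by norm_num : (4 : ℕ∞) < 5) (le_egirth.mpr fun u w hw ↦ ?_)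
    have heven : Even w.length := by
      by_contra hodd
      have h3 := w.three_le_chromaticNumber_of_odd_loop (Nat.not_even_iff_odd.mp hodd)
      have h2 := chromaticNumber_le_two_iff_isBipartite.mpr hG
      exact absurd (h3.trans h2) (by norm_num)
    have h3 := hw.three_le_length
    have h4 : w.length ≠ 4 := fun h ↦ hno ⟨u, w, hw, h⟩
    have : 5 ≤ w.length := by grind
    exact_mod_cast this

end SimpleGraph

section Tanner

variable {α β : Type*} {M : Matrix α β ℕ}

@[simp]
theorem tanner_adj_inl_inr {i : α} {j : β} :
    (tanner M).Adj (.inl i) (.inr j) ↔ M i j ≠ 0 := by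
  simp [tanner]

@[simp]
theorem tanner_adj_inr_inl {i : α} {j : β} :
    (tanner M).Adj (.inr j) (.inl i) ↔ M i j ≠ 0 := by
  simp [tanner]

@[simp]
theorem not_tanner_adj_inl_inl {i i' : α} : ¬ (tanner M).Adj (.inl i) (.inl i') := by
  simp [tanner]

@[simp]
theorem not_tanner_adj_inr_inr {j j' : β} : ¬ (tanner M).Adj (.inr j) (.inr j') := by
  simp [tanner]

theorem tanner_isBipartite : (tanner M).IsBipartite :=
  SimpleGraph.IsBipartiteWith.isBipartite (s := Set.range Sum.inl) (t := Set.range Sum.inr)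
    { disjoint := Set.disjoint_left.mpr (by simp)
      mem_of_adj := by rintro (i | j) (i' | j') <;> simp }

theorem exists_square_tanner_iff :
    (∃ a b c d, a ≠ c ∧ b ≠ d ∧ (tanner M).Adj a b ∧ (tanner M).Adj b c ∧
        (tanner M).Adj c d ∧ (tanner M).Adj d a) ↔
      ∃ i i', i ≠ i' ∧ {j | M i j ≠ 0 ∧ M i' j ≠ 0}.Nontrivial := by
  constructor
  · rintro ⟨a | b, c | d, e | f, g | h, hac, hbd, h1, h2, h3, h4⟩ <;>
    simp only [tanner_adj_inl_inr, tanner_adj_inr_inl, not_tanner_adj_inl_inl,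
      not_tanner_adj_inr_inr, ne_eq, Sum.inl.injEq, Sum.inr.injEq] at *
    · exact ⟨a, e, hac, d, ⟨h1, h2⟩, h, ⟨h4, h3⟩, hbd⟩
    · exact ⟨c, g, hbd, b, ⟨h1, h4⟩, f, ⟨h2, h3⟩, hac⟩
  · rintro ⟨i, i', hii', j, ⟨hij, hi'j⟩, j', ⟨hij', hi'j'⟩, hjj'⟩
    exact ⟨.inl i, .inr j, .inl i', .inr j', by simpa, by simpa, by simpa, by simpa, by simpa,
      by simpa⟩

theorem four_lt_egirth_tanner_iff :
    4 < (tanner M).egirth ↔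
      ∀ i i', i ≠ i' → {j | M i j ≠ 0 ∧ M i' j ≠ 0}.Subsingleton := by
  rw [tanner_isBipartite.four_lt_egirth_iff, SimpleGraph.exists_isCycle_length_eq_four_iff,
    exists_square_tanner_iff]
  simp only [← Set.not_nontrivial_iff, not_exists, not_and]

end Tanner

section Permutation

open Finset

variable {N : ℕ}

theorem permMatrix_mul_transpose_apply (σ τ : Equiv.Perm (Fin N)) (a b : Fin N) :
    (permMatrix σ * (permMatrix τ)ᵀ) a b = if σ a = τ b then 1 else 0 := by
  simp [permMatrix, Matrix.mul_apply, eq_comm]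

theorem sum_permMatrix_mul_transpose_apply {ι : Type*} [Fintype ι]
    (σ τ : ι → Equiv.Perm (Fin N)) (a b : Fin N) :
    (∑ k, permMatrix (σ k) * (permMatrix (τ k))ᵀ) a b = #{k | σ k a = τ k b} := by
  simp [Matrix.sum_apply, permMatrix_mul_transpose_apply]

variable {nc nv : ℕ} (σ : Fin nc → Fin nv → Equiv.Perm (Fin N))

theorem Hperm_ne_zero_iff {i : Fin nc} {a : Fin N} {k : Fin nv} {c : Fin N} :
    Hperm σ (i, a) (k, c) ≠ 0 ↔ σ i k a = c := by
  simp [Hperm, permMatrix]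

theorem Hperm_commonColumns_subsingleton_iff (i j : Fin nc) (a b : Fin N) :
    {q | Hperm σ (i, a) q ≠ 0 ∧ Hperm σ (j, b) q ≠ 0}.Subsingleton ↔
      {k | σ i k a = σ j k b}.Subsingleton := by
  have : {q | Hperm σ (i, a) q ≠ 0 ∧ Hperm σ (j, b) q ≠ 0} =
      (fun k ↦ (k, σ i k a)) '' {k | σ i k a = σ j k b} := by
    ext ⟨k, c⟩
    simp only [Set.mem_ofPred_eq, Hperm_ne_zero_iff, Set.mem_image, Prod.mk.injEq]
    grind
  rw [this, Function.Injective.subsingleton_image_iff fun k k' h ↦ congrArg Prod.fst h]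

end Permutation

theorem stmt15 {N nc nv : ℕ} (σ : Fin nc → Fin nv → Equiv.Perm (Fin N)) :
    (4 : ℕ∞) < (tanner (Hperm σ)).egirth ↔
      ∀ i j : Fin nc, i ≠ j → ∀ a b : Fin N,
        (∑ k, permMatrix (σ i k) * (permMatrix (σ j k))ᵀ) a b ≤ 1 := by
  simp only [four_lt_egirth_tanner_iff, Prod.forall, sum_permMatrix_mul_transpose_apply,
    Finset.card_le_one_iff_subsingleton, Finset.coe_filter, Hperm_commonColumns_subsingleton_iff]
  constructor
  · intro h i j hij a b
    simpa using h i a j b (by simp [hij])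
  · intro h i a j b hne
    obtain rfl | hij := eq_or_ne i j
    · have hab : a ≠ b := by simpa using hne
      exact fun k hk _ _ ↦ absurd ((σ i k).injective hk) hab
    · simpa using h i j hij a b
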